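/- Let g, h, y be three positive locally integrable functions on (t₀, ∞) such that y' ≤ g·y + h for t ≥ t₀, and suppose for some r > 0 and all t ≥ t₀ we have ∫_t^{t+r} g ≤ a₁, ∫_t^{t+r} h ≤ a₂, ∫_t^{t+r} y ≤ a₃. Then y(t + r) ≤ (a₃/r + a₂)·exp(a₁) for all t ≥ t₀. -/

import Mathlib

open MeasureTheory intervalIntegral Set Real Filter Topology

/-!
For `s ∈ (t, t + r)`, multiplying the differential inequality by the integrating factor
`exp (-∫_s^τ g)` and integrating over `[s, t + r]` gives `y (t + r) ≤ (y s + a₂) * exp a₁`;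
averaging this over `s ∈ (t, t + r)` replaces `y s` by `(1 / r) ∫ y ≤ a₃ / r`.
Since `g` is merely integrable, the integrating factor is taken for a continuous `L¹`
approximation of `g`, and the error is absorbed using a bound for `y` on the compact interval.
-/

theorem IntervalIntegrable.exists_continuous_nonneg_integral_abs_sub_le
    {f : ℝ → ℝ} {a b : ℝ} (hab : a ≤ b) (hf : IntervalIntegrable f volume a b)
    (hf0 : ∀ x ∈ Ioc a b, 0 ≤ f x) {ε : ℝ} (hε : 0 < ε) :
    ∃ c : ℝ → ℝ, Continuous c ∧ (∀ x, 0 ≤ c x) ∧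
      ∫ x in a..b, |f x - c x| ≤ ε := by
  have hfI : IntegrableOn f (Ioc a b) :=
    (intervalIntegrable_iff_integrableOn_Ioc_of_le hab).1 hf
  obtain ⟨c, -, hfc, hc, hcI⟩ := hfI.exists_hasCompactSupport_integral_sub_le hε
  refine ⟨fun x => |c x|, hc.abs, fun x => abs_nonneg _, ?_⟩
  rw [integral_of_le hab]
  refine le_trans (setIntegral_mono_on (hfI.sub hcI.abs).abs (hfI.sub hcI).norm measurableSet_Ioc
    fun x hx => ?_) hfc
  rw [Real.norm_eq_abs, ← abs_of_nonneg (hf0 x hx)]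
  exact abs_abs_sub_abs_le_abs_sub _ _

theorem gronwall_of_continuous_coeff {a b : ℝ} {c φ y y' : ℝ → ℝ} (hab : a ≤ b)
    (hc : Continuous c) (hc0 : ∀ x ∈ Icc a b, 0 ≤ c x) (hy : ContinuousOn y (Icc a b))
    (hy' : ∀ x ∈ Ioo a b, HasDerivAt y (y' x) x) (hφ : IntegrableOn φ (Icc a b))
    (hφ0 : ∀ x ∈ Ioo a b, 0 ≤ φ x) (hle : ∀ x ∈ Ioo a b, y' x ≤ c x * y x + φ x) :
    y b ≤ (y a + ∫ x in a..b, φ x) * exp (∫ x in a..b, c x) := by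
  set C : ℝ → ℝ := fun t => ∫ x in a..t, c x with hCdef
  have hC : ∀ t, HasDerivAt C (c t) t := fun t =>
    integral_hasDerivAt_right (hc.intervalIntegrable a t) (hc.stronglyMeasurableAtFilter _ _)
      hc.continuousAt
  have hC0 : ∀ t ∈ Icc a b, 0 ≤ C t := fun t ht =>
    integral_nonneg ht.1 fun x hx => hc0 x ⟨hx.1, hx.2.trans ht.2⟩
  have hCcont : Continuous C := continuous_iff_continuousAt.2 fun t => (hC t).continuousAt
  have hF : y b * exp (-C b) - y a * exp (-C a) ≤ ∫ x in a..b, φ x := by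
    refine sub_le_integral_of_hasDeriv_right_of_le hab (hy.mul hCcont.neg.rexp.continuousOn)
      (fun x hx => ((hy' x hx).mul (hC x).neg.exp).hasDerivWithinAt) hφ fun x hx => ?_
    have hexp : exp (-C x) ≤ 1 :=
      exp_le_one_iff.2 (neg_nonpos.2 (hC0 x (Ioo_subset_Icc_self hx)))
    calc y' x * exp (-C x) + y x * (exp (-C x) * -c x) = (y' x - c x * y x) * exp (-C x) := by
          ring
      _ ≤ φ x * exp (-C x) := by gcongr; linarith [hle x hx]
      _ ≤ φ x := mul_le_of_le_one_right (hφ0 x hx) hexp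
  simp only [hCdef, integral_same, neg_zero, exp_zero, mul_one] at hF
  calc y b = y b * exp (-C b) * exp (C b) := by simp [mul_assoc, ← exp_add]
    _ ≤ _ := mul_le_mul_of_nonneg_right (by linarith) (exp_pos _).le

section IntegrableCoeff

variable {a b : ℝ} {g h y y' : ℝ → ℝ}

-- The error `(g - c) * y ≤ M * |g - c|` of replacing `g` by `c` is charged to the forcing term.
theorem gronwall_of_integrable_coeff_of_abs_le {M ε : ℝ} (hab : a ≤ b)
    (hg : IntervalIntegrable g volume a b) (hg0 : ∀ x ∈ Ioc a b, 0 ≤ g x)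
    (hh : IntervalIntegrable h volume a b) (hh0 : ∀ x ∈ Ioc a b, 0 ≤ h x)
    (hy : ContinuousOn y (Icc a b)) (hy' : ∀ x ∈ Ioo a b, HasDerivAt y (y' x) x)
    (hy₀ : 0 ≤ y a) (hle : ∀ x ∈ Ioo a b, y' x ≤ g x * y x + h x)
    (hM : ∀ x ∈ Icc a b, |y x| ≤ M) (hε : 0 < ε) :
    y b ≤ (y a + (∫ x in a..b, h x) + M * ε) * exp ((∫ x in a..b, g x) + ε) := by
  have hM0 : 0 ≤ M := (abs_nonneg _).trans (hM a (left_mem_Icc.2 hab))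
  obtain ⟨c, hc, hc0, hgc⟩ := hg.exists_continuous_nonneg_integral_abs_sub_le hab hg0 hε
  have hcI := hc.intervalIntegrable (μ := volume) a b
  have hdI : IntervalIntegrable (fun x => |g x - c x|) volume a b := (hg.sub hcI).abs
  have hφ0 : ∀ x ∈ Ioc a b, 0 ≤ h x + M * |g x - c x| := fun x hx =>
    add_nonneg (hh0 x hx) (mul_nonneg hM0 (abs_nonneg _))
  have hle_c : ∀ x ∈ Ioo a b, y' x ≤ c x * y x + (h x + M * |g x - c x|) := by
    intro x hx
    have herr : (g x - c x) * y x ≤ |g x - c x| * M := (le_abs_self _).trans <| by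
      rw [abs_mul]
      exact mul_le_mul_of_nonneg_left (hM x (Ioo_subset_Icc_self hx)) (abs_nonneg _)
    linarith [hle x hx]
  have hgronwall := gronwall_of_continuous_coeff hab hc (fun x _ => hc0 x) hy hy'
    ((intervalIntegrable_iff_integrableOn_Icc_of_le hab).1 (hh.add (hdI.const_mul M)))
    (fun x hx => hφ0 x (Ioo_subset_Ioc_self hx)) hle_c
  have hφ_nonneg : 0 ≤ ∫ x in a..b, h x + M * |g x - c x| := by
    rw [integral_of_le hab]
    exact setIntegral_nonneg measurableSet_Ioc hφ0
  have hφ_le : ∫ x in a..b, h x + M * |g x - c x| ≤ (∫ x in a..b, h x) + M * ε := by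
    rw [integral_add hh (hdI.const_mul M), intervalIntegral.integral_const_mul]
    gcongr
  have hc_le : ∫ x in a..b, c x ≤ (∫ x in a..b, g x) + ε := by
    have : ∫ x in a..b, c x - g x ≤ ∫ x in a..b, |g x - c x| :=
      integral_mono_on hab (hcI.sub hg) hdI fun x _ => by rw [abs_sub_comm]; exact le_abs_self _
    rw [integral_sub hcI hg] at this
    linarith
  calc y b ≤ _ := hgronwall
    _ ≤ _ := mul_le_mul (by linarith) (exp_le_exp.2 hc_le) (exp_pos _).le (by linarith)

theorem gronwall_of_integrable_coeff (hab : a ≤ b)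
    (hg : IntervalIntegrable g volume a b) (hg0 : ∀ x ∈ Ioc a b, 0 ≤ g x)
    (hh : IntervalIntegrable h volume a b) (hh0 : ∀ x ∈ Ioc a b, 0 ≤ h x)
    (hy : ContinuousOn y (Icc a b)) (hy' : ∀ x ∈ Ioo a b, HasDerivAt y (y' x) x)
    (hy₀ : 0 ≤ y a) (hle : ∀ x ∈ Ioo a b, y' x ≤ g x * y x + h x) :
    y b ≤ (y a + ∫ x in a..b, h x) * exp (∫ x in a..b, g x) := by
  obtain ⟨M, hM⟩ := isCompact_Icc.exists_bound_of_continuousOn hy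
  have hlim : Tendsto
      (fun ε => (y a + (∫ x in a..b, h x) + M * ε) * exp ((∫ x in a..b, g x) + ε))
      (𝓝[>] 0) (𝓝 ((y a + ∫ x in a..b, h x) * exp (∫ x in a..b, g x))) :=
    tendsto_nhdsWithin_of_tendsto_nhds (Continuous.tendsto' (by fun_prop) _ _ (by simp))
  exact ge_of_tendsto hlim (eventually_nhdsWithin_of_forall fun ε hε =>
    gronwall_of_integrable_coeff_of_abs_le hab hg hg0 hh hh0 hy hy' hy₀ hle hM hε)

end IntegrableCoeff

theorem mul_le_integral_of_le_on_Ioo {f : ℝ → ℝ} {a b C : ℝ} (hab : a ≤ b)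
    (hf : IntervalIntegrable f volume a b) (hC : ∀ x ∈ Ioo a b, C ≤ f x) :
    (b - a) * C ≤ ∫ x in a..b, f x := by
  simpa using integral_mono_on_of_le_Ioo hab intervalIntegrable_const hf hC

theorem uniform_gronwall_general
    (t₀ r a₁ a₂ a₃ : ℝ) (hr : 0 < r)
    (ha₂ : 0 < a₂)
    (g h y y' : ℝ → ℝ)
    (hg : ∀ t, t₀ < t → 0 ≤ g t)
    (hh : ∀ t, t₀ < t → 0 ≤ h t)
    (hy : ∀ t, t₀ < t → 0 ≤ y t)
    (hderiv : ∀ t, t₀ ≤ t → HasDerivAt y (y' t) t)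
    (hineq : ∀ t, t₀ ≤ t → y' t ≤ g t * y t + h t)
    (hgi : ∀ t, t₀ ≤ t → IntervalIntegrable g volume t (t + r))
    (hhi : ∀ t, t₀ ≤ t → IntervalIntegrable h volume t (t + r))
    (hyi : ∀ t, t₀ ≤ t → IntervalIntegrable y volume t (t + r))
    (hga : ∀ t, t₀ ≤ t → (∫ s in t..(t + r), g s) ≤ a₁)
    (hha : ∀ t, t₀ ≤ t → (∫ s in t..(t + r), h s) ≤ a₂)
    (hya : ∀ t, t₀ ≤ t → (∫ s in t..(t + r), y s) ≤ a₃) :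
    ∀ t, t₀ ≤ t → y (t + r) ≤ (a₃ / r + a₂) * Real.exp a₁ := by
  intro t ht
  have hwindow : ∀ s ∈ Ioo t (t + r), y (t + r) ≤ (y s + a₂) * exp a₁ := by
    intro s hs
    have hs₀ : t₀ < s := ht.trans_lt hs.1
    have hsub : uIcc s (t + r) ⊆ uIcc s (s + r) :=
      uIcc_subset_uIcc left_mem_uIcc (mem_uIcc_of_le hs.2.le (by linarith [hs.1]))
    have hmono : ∀ f : ℝ → ℝ, (∀ x, t₀ < x → 0 ≤ f x) →
        IntervalIntegrable f volume s (s + r) →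
        ∫ x in s..t + r, f x ≤ ∫ x in s..s + r, f x :=
      fun f hf0 hfi => integral_mono_interval le_rfl hs.2.le (by linarith [hs.1])
        (ae_restrict_of_forall_mem measurableSet_Ioc fun x hx => hf0 x (hs₀.trans hx.1)) hfi
    calc y (t + r) ≤ (y s + ∫ x in s..t + r, h x) * exp (∫ x in s..t + r, g x) :=
          gronwall_of_integrable_coeff hs.2.le ((hgi s hs₀.le).mono_set hsub)
            (fun x hx => hg x (hs₀.trans hx.1)) ((hhi s hs₀.le).mono_set hsub)
            (fun x hx => hh x (hs₀.trans hx.1))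
            (fun x hx => (hderiv x (hs₀.le.trans hx.1)).continuousAt.continuousWithinAt)
            (fun x hx => hderiv x (hs₀.le.trans hx.1.le)) (hy s hs₀)
            fun x hx => hineq x (hs₀.le.trans hx.1.le)
      _ ≤ (y s + a₂) * exp a₁ := by
          gcongr
          · exact add_nonneg (hy s hs₀) ha₂.le
          · exact (hmono h hh (hhi s hs₀.le)).trans (hha s hs₀.le)
          · exact (hmono g hg (hgi s hs₀.le)).trans (hga s hs₀.le)
  have havg := mul_le_integral_of_le_on_Ioo (by linarith)
    (((hyi t ht).add intervalIntegrable_const).mul_const (exp a₁)) hwindow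
  rw [intervalIntegral.integral_mul_const, integral_add (hyi t ht) intervalIntegrable_const,
    intervalIntegral.integral_const, add_sub_cancel_left, smul_eq_mul] at havg
  rw [div_add' _ _ _ hr.ne', div_mul_eq_mul_div, le_div_iff₀ hr]
  linarith [mul_le_mul_of_nonneg_right (hya t ht) (exp_pos a₁).le]

/-- The Uniform Gronwall Lemma. -/
theorem uniform_gronwall
    (t₀ r a₁ a₂ a₃ : ℝ) (hr : 0 < r)
    (ha₁ : 0 < a₁) (ha₂ : 0 < a₂) (ha₃ : 0 < a₃)
    (g h y y' : ℝ → ℝ)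
    (hg : ∀ t, t₀ < t → 0 ≤ g t)
    (hh : ∀ t, t₀ < t → 0 ≤ h t)
    (hy : ∀ t, t₀ < t → 0 ≤ y t)
    (hderiv : ∀ t, t₀ ≤ t → HasDerivAt y (y' t) t)
    (hineq : ∀ t, t₀ ≤ t → y' t ≤ g t * y t + h t)
    (hgi : ∀ t, t₀ ≤ t → IntervalIntegrable g volume t (t + r))
    (hhi : ∀ t, t₀ ≤ t → IntervalIntegrable h volume t (t + r))
    (hyi : ∀ t, t₀ ≤ t → IntervalIntegrable y volume t (t + r))
    (hga : ∀ t, t₀ ≤ t → (∫ s in t..(t + r), g s) ≤ a₁)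
    (hha : ∀ t, t₀ ≤ t → (∫ s in t..(t + r), h s) ≤ a₂)
    (hya : ∀ t, t₀ ≤ t → (∫ s in t..(t + r), y s) ≤ a₃) :
    ∀ t, t₀ ≤ t → y (t + r) ≤ (a₃ / r + a₂) * Real.exp a₁ :=
  uniform_gronwall_general t₀ r a₁ a₂ a₃ hr ha₂ g h y y' hg hh hy hderiv hineq hgi hhi hyi hga hha
    hya
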